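/- For k ∈ {1, 5} and d₂ ∈ {0, 2, 4, …, 58}, let S(k, d₂) be the family on ℤ[x]/(x⁴) given by ψ_2(x) = 4x + kx² + d₂x³ and, for each odd prime p, ψ_p(x) = p²x + (k·p²(p² − 1)/12)·x² + d_p·x³, where d_p = p²(p⁴ − 1)·d₂/60 + k²·p²(p² − 1)(p² − 4)/360 (these coefficients are integers). Then each of these sixty families S(k, d₂) is a filtered λ-ring structure on ℤ[x]/(x⁴), the sixty structures are mutually non-isomorphic, and every filtered λ-ring structure R on ℤ[x]/(x⁴) satisfying ψ_p^R(x) ≡ p²x (mod x²) for all primes p is isomorphic to one of them. -/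

import Mathlib

open Polynomial

noncomputable section

/-- The truncated polynomial ring `ℤ[x]/(xⁿ)`. -/
abbrev TP (n : ℕ) : Type := Polynomial ℤ ⧸ Ideal.span {(X : Polynomial ℤ) ^ n}

/-- The class of `x` in `ℤ[x]/(xⁿ)`. -/
def xx (n : ℕ) : TP n := Ideal.Quotient.mk _ (X : Polynomial ℤ)

/-- A filtered λ-ring structure on `ℤ[x]/(xⁿ)`, presented (via Wilkerson's theorem) as a
family of Adams operations `ψ p`, indexed by the primes `p`: each `ψ p` is a ring
endomorphism preserving the filtration ideal `(x)`, they pairwise commute, and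
`ψ p r ≡ r ^ p (mod p)`. -/
structure AdamsFamily (n : ℕ) : Type where
  ψ : Nat.Primes → (TP n →+* TP n)
  maps_ideal : ∀ (p : Nat.Primes), ∀ a ∈ Ideal.span {xx n}, ψ p a ∈ Ideal.span {xx n}
  comm : ∀ p q : Nat.Primes, (ψ p).comp (ψ q) = (ψ q).comp (ψ p)
  frob : ∀ (p : Nat.Primes) (a : TP n),
    ψ p a - a ^ (p : ℕ) ∈ Ideal.span {((p : ℕ) : TP n)}

/-- Isomorphism of filtered λ-ring structures on `ℤ[x]/(xⁿ)`: a filtration-preserving ring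
automorphism intertwining the Adams operations. -/
def AdamsIso {n : ℕ} (R S : AdamsFamily n) : Prop :=
  ∃ σ : TP n ≃+* TP n,
    (Ideal.span {xx n}).map σ.toRingHom = Ideal.span {xx n} ∧
    ∀ p : Nat.Primes, σ.toRingHom.comp (R.ψ p) = (S.ψ p).comp σ.toRingHom

/-- The prime 2 as an element of `Nat.Primes`. -/
def P2 : Nat.Primes := ⟨2, Nat.prime_two⟩

/-- The prime 3 as an element of `Nat.Primes`. -/
def P3 : Nat.Primes := ⟨3, Nat.prime_three⟩

/-- The coefficient `d_p = p²(p⁴ − 1)d₂/60 + k²p²(p² − 1)(p² − 4)/360`. -/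
def dcoef (k d2 : ℤ) (p : ℕ) : ℤ :=
  (p : ℤ) ^ 2 * ((p : ℤ) ^ 4 - 1) * d2 / 60 +
    k ^ 2 * (p : ℤ) ^ 2 * ((p : ℤ) ^ 2 - 1) * ((p : ℤ) ^ 2 - 4) / 360

/-- The coefficient `c_p = k·p²(p² − 1)/12`. -/
def ccoef (k : ℤ) (p : ℕ) : ℤ := k * ((p : ℤ) ^ 2 * ((p : ℤ) ^ 2 - 1)) / 12

/-- The family `S(k, d₂)`: `ψ_2(x) = 4x + kx² + d₂x³` and
`ψ_p(x) = p²x + (k·p²(p² − 1)/12)x² + d_p x³` for odd primes `p`. -/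
def SpecKD (k d2 : ℤ) (S : AdamsFamily 4) : Prop :=
  S.ψ P2 (xx 4) = (4 : TP 4) * xx 4 + (k : TP 4) * xx 4 ^ 2 + (d2 : TP 4) * xx 4 ^ 3 ∧
  ∀ p : Nat.Primes, 2 < (p : ℕ) →
    S.ψ p (xx 4) = ((p : ℕ) : TP 4) ^ 2 * xx 4 + (ccoef k (p : ℕ) : TP 4) * xx 4 ^ 2 +
      (dcoef k d2 (p : ℕ) : TP 4) * xx 4 ^ 3

/-!
A filtration-preserving endomorphism of `ℤ[x]/(x⁴)` is a substitution `x ↦ ax + bx² + cx³`, and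
composing substitutions is an explicit polynomial law on the triples `(a, b, c)`, so everything
reduces to integer arithmetic. If `ψ₂ = (4, b, c)` and `ψ_p = (p², B, C)`, then `ψ₂ψ_p = ψ_pψ₂`
forces `12B = p²(p² − 1)b` and `60C = p²(p⁴ − 1)c + 2bB(p² − 4)`: the whole family is determined
by `ψ₂`. The congruence `ψ_p(r) ≡ r^p` at `p = 2` makes `b` odd and `c` even, and at `p = 3`, where
`C = 12c + b²`, it makes `b` prime to `3`. Conjugating by `x ↦ ±x + u₂x² + u₃x³` changes the sign
of `b` and shifts it by multiples of `12`, and then shifts `c` by multiples of `60`; this brings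
`(b, c)` to a unique `(k, d₂)` with `k ∈ {1, 5}` and `0 ≤ d₂ < 60`.
-/

namespace TP

variable {n : ℕ}

theorem xx_pow_eq_zero : xx n ^ n = 0 := by
  rw [xx, ← map_pow, Ideal.Quotient.eq_zero_iff_mem]
  exact Ideal.subset_span rfl

theorem mk_eq_mk_iff {f g : ℤ[X]} :
    (Ideal.Quotient.mk _ f : TP n) = Ideal.Quotient.mk _ g ↔ ∀ i < n, f.coeff i = g.coeff i := by
  simp [Ideal.Quotient.eq, Ideal.mem_span_singleton, X_pow_dvd_iff, sub_eq_zero]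

theorem ringHom_ext {S : Type*} [Ring S] {φ ψ : TP n →+* S} (h : φ (xx n) = ψ (xx n)) : φ = ψ :=
  Ideal.Quotient.ringHom_ext (Polynomial.ringHom_ext' (RingHom.ext_int _ _) h)

def lift {S : Type*} [CommRing S] (y : S) (hy : y ^ n = 0) : TP n →+* S :=
  Ideal.Quotient.lift _ (eval₂RingHom (Int.castRingHom S) y) fun f hf => by
    obtain ⟨g, rfl⟩ := Ideal.mem_span_singleton'.1 hf
    simp [hy]

@[simp]
theorem lift_xx {S : Type*} [CommRing S] (y : S) (hy : y ^ n = 0) : lift y hy (xx n) = y := by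
  simp [lift, xx]

theorem sub_pow_mem_span_of_xx {p : ℕ} (hp : p.Prime) (φ : TP n →+* TP n)
    (h : φ (xx n) - xx n ^ p ∈ Ideal.span {(p : TP n)}) (a : TP n) :
    φ a - a ^ p ∈ Ideal.span {(p : TP n)} := by
  by_cases hu : IsUnit (p : TP n)
  · simp [Ideal.span_singleton_eq_top.2 hu]
  have := Fact.mk hp
  have := CharP.quotient (TP n) p hu
  have := ExpChar.prime (R := TP n ⧸ Ideal.span {(p : TP n)}) hp
  have key : (Ideal.Quotient.mk (Ideal.span {(p : TP n)})).comp φ =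
      (frobenius (TP n ⧸ Ideal.span {(p : TP n)}) p).comp (Ideal.Quotient.mk _) :=
    ringHom_ext (by simpa [frobenius_def, ← map_pow] using Ideal.Quotient.eq.2 h)
  simpa [frobenius_def, ← map_pow, Ideal.Quotient.eq] using RingHom.congr_fun key a

theorem symm_mem_span_xx {σ : TP n ≃+* TP n}
    (hσ : (Ideal.span {xx n}).map σ.toRingHom = Ideal.span {xx n})
    {a : TP n} (ha : a ∈ Ideal.span {xx n}) : σ.symm a ∈ Ideal.span {xx n} := by
  rw [← hσ] at ha
  obtain ⟨b, hb, rfl⟩ := (Ideal.mem_map_of_equiv σ a).1 ha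
  simpa using hb

end TP

namespace AdamsFamily

variable {n : ℕ}

def conj (R : AdamsFamily n) (σ : TP n ≃+* TP n)
    (hσ : (Ideal.span {xx n}).map σ.toRingHom = Ideal.span {xx n}) : AdamsFamily n where
  ψ p := σ.toRingHom.comp ((R.ψ p).comp σ.symm.toRingHom)
  maps_ideal p a ha :=
    hσ ▸ Ideal.mem_map_of_mem _ (R.maps_ideal p _ (TP.symm_mem_span_xx hσ ha))
  comm p q := by
    refine RingHom.ext fun a => ?_
    simpa using congrArg σ (RingHom.congr_fun (R.comm p q) (σ.symm a))
  frob p a := by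
    obtain ⟨r, hr⟩ := Ideal.mem_span_singleton'.1 (R.frob p (σ.symm a))
    refine Ideal.mem_span_singleton'.2 ⟨σ r, ?_⟩
    simpa using congrArg σ hr

theorem conj_ψ_comp (R : AdamsFamily n) {σ : TP n ≃+* TP n}
    (hσ : (Ideal.span {xx n}).map σ.toRingHom = Ideal.span {xx n}) (p : Nat.Primes) :
    ((R.conj σ hσ).ψ p).comp σ.toRingHom = σ.toRingHom.comp (R.ψ p) :=
  RingHom.ext fun a => by simp [conj]

theorem adamsIso_conj (R : AdamsFamily n) {σ : TP n ≃+* TP n}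
    (hσ : (Ideal.span {xx n}).map σ.toRingHom = Ideal.span {xx n}) :
    AdamsIso R (R.conj σ hσ) :=
  ⟨σ, hσ, fun p => (R.conj_ψ_comp hσ p).symm⟩

end AdamsFamily

local notation "x" => xx 4

namespace TP

def cubic (a b c : ℤ) : TP 4 := a * x + b * x ^ 2 + c * x ^ 3

theorem cubic_eq_xx_mul (a b c : ℤ) : cubic a b c = x * (a + b * x + c * x ^ 2) := by
  rw [cubic]; ring

theorem intCast_add_cubic_eq_mk (a₀ a b c : ℤ) :
    (a₀ : TP 4) + cubic a b c =
      Ideal.Quotient.mk _ (C a₀ + C a * X + C b * X ^ 2 + C c * X ^ 3) := by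
  simp [cubic, xx]
  ring

theorem intCast_add_cubic_inj {a₀ a b c a₀' a' b' c' : ℤ}
    (h : (a₀ : TP 4) + cubic a b c = a₀' + cubic a' b' c') :
    a₀ = a₀' ∧ a = a' ∧ b = b' ∧ c = c' := by
  rw [intCast_add_cubic_eq_mk, intCast_add_cubic_eq_mk, mk_eq_mk_iff] at h
  have h0 := h 0 (by norm_num)
  have h1 := h 1 (by norm_num)
  have h2 := h 2 (by norm_num)
  have h3 := h 3 (by norm_num)
  simp only [coeff_add, coeff_C_mul, coeff_C, coeff_X_pow, coeff_X] at h0 h1 h2 h3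
  norm_num at h0 h1 h2 h3
  exact ⟨h0, h1, h2, h3⟩

theorem exists_eq_intCast_add_cubic (v : TP 4) : ∃ a₀ a b c : ℤ, v = a₀ + cubic a b c := by
  obtain ⟨f, rfl⟩ := Ideal.Quotient.mk_surjective v
  refine ⟨f.coeff 0, f.coeff 1, f.coeff 2, f.coeff 3, ?_⟩
  rw [intCast_add_cubic_eq_mk, mk_eq_mk_iff]
  intro i hi
  interval_cases i <;>
    simp only [coeff_add, coeff_C_mul, coeff_C, coeff_X_pow, coeff_X] <;> norm_num

theorem cubic_inj {a b c a' b' c' : ℤ} :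
    cubic a b c = cubic a' b' c' ↔ a = a' ∧ b = b' ∧ c = c' := by
  refine ⟨fun h => (intCast_add_cubic_inj (a₀ := 0) (a₀' := 0) (by rw [h])).2, ?_⟩
  rintro ⟨rfl, rfl, rfl⟩
  rfl

theorem mem_span_xx_iff {v : TP 4} : v ∈ Ideal.span {x} ↔ ∃ a b c : ℤ, v = cubic a b c := by
  refine ⟨fun h => ?_, fun ⟨a, b, c, h⟩ => ?_⟩
  · obtain ⟨t, rfl⟩ := Ideal.mem_span_singleton'.1 h
    obtain ⟨t₀, a, b, c, rfl⟩ := exists_eq_intCast_add_cubic t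
    refine ⟨t₀, a, b, ?_⟩
    rw [cubic, cubic]
    linear_combination (c : TP 4) * xx_pow_eq_zero
  · exact Ideal.mem_span_singleton.2 ⟨_, h.trans (cubic_eq_xx_mul a b c)⟩

theorem eq_zero_of_cubic_mem_span_xx_sq {a b c : ℤ} (h : cubic a b c ∈ Ideal.span {x ^ 2}) :
    a = 0 := by
  obtain ⟨t, ht⟩ := Ideal.mem_span_singleton'.1 h
  obtain ⟨t₀, t₁, t₂, t₃, rfl⟩ := exists_eq_intCast_add_cubic t
  refine (cubic_inj.1 (?_ : cubic 0 t₀ t₁ = cubic a b c)).1.symm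
  rw [← ht, cubic, cubic]
  linear_combination -((t₂ : TP 4) + (t₃ : TP 4) * x) * xx_pow_eq_zero

theorem cubic_mem_span_intCast_iff {a b c m : ℤ} :
    cubic a b c ∈ Ideal.span {(m : TP 4)} ↔ m ∣ a ∧ m ∣ b ∧ m ∣ c := by
  refine ⟨fun h => ?_, fun ⟨⟨a', ha⟩, ⟨b', hb⟩, ⟨c', hc⟩⟩ => ?_⟩
  · obtain ⟨t, ht⟩ := Ideal.mem_span_singleton'.1 h
    obtain ⟨t₀, t₁, t₂, t₃, rfl⟩ := exists_eq_intCast_add_cubic t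
    have : ((m * t₀ : ℤ) : TP 4) + cubic (m * t₁) (m * t₂) (m * t₃) = (0 : ℤ) + cubic a b c := by
      rw [← ht, cubic, cubic]; push_cast; ring
    obtain ⟨-, h₁, h₂, h₃⟩ := intCast_add_cubic_inj this
    exact ⟨⟨t₁, h₁.symm⟩, ⟨t₂, h₂.symm⟩, ⟨t₃, h₃.symm⟩⟩
  · refine Ideal.mem_span_singleton'.2 ⟨cubic a' b' c', ?_⟩
    rw [cubic, cubic, ha, hb, hc]; push_cast; ring

theorem map_cubic (φ : TP 4 →+* TP 4) {a b c : ℤ} (h : φ x = cubic a b c) (t₁ t₂ t₃ : ℤ) :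
    φ (cubic t₁ t₂ t₃) =
      cubic (t₁ * a) (t₁ * b + t₂ * a ^ 2) (t₁ * c + 2 * t₂ * a * b + t₃ * a ^ 3) := by
  simp only [cubic, map_add, map_mul, map_pow, map_intCast] at h ⊢
  rw [h]
  have hx : ∀ k, 4 ≤ k → x ^ k = 0 := fun k hk => pow_eq_zero_of_le hk xx_pow_eq_zero
  push_cast
  ring_nf
  simp only [hx, Nat.reduceLeDiff, mul_zero, zero_mul, add_zero]

def subst (a b c : ℤ) : TP 4 →+* TP 4 :=
  lift (cubic a b c) (by rw [cubic_eq_xx_mul, mul_pow, xx_pow_eq_zero, zero_mul])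

@[simp]
theorem subst_xx (a b c : ℤ) : subst a b c x = cubic a b c := lift_xx _ _

theorem eq_subst_iff {φ : TP 4 →+* TP 4} {a b c : ℤ} :
    φ = subst a b c ↔ φ x = cubic a b c :=
  ⟨fun h => h ▸ subst_xx a b c, fun h => ringHom_ext (h.trans (subst_xx a b c).symm)⟩

theorem subst_comp_subst (a b c a' b' c' : ℤ) :
    (subst a b c).comp (subst a' b' c') =
      subst (a' * a) (a' * b + b' * a ^ 2) (a' * c + 2 * b' * a * b + c' * a ^ 3) :=
  ringHom_ext (by rw [RingHom.comp_apply, subst_xx, subst_xx, map_cubic _ (subst_xx a b c)])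

theorem subst_inj {a b c a' b' c' : ℤ} :
    subst a b c = subst a' b' c' ↔ a = a' ∧ b = b' ∧ c = c' := by
  rw [← cubic_inj, ← subst_xx, ← subst_xx a']
  exact ⟨fun h => h ▸ rfl, ringHom_ext⟩

theorem subst_one_zero_zero : subst 1 0 0 = RingHom.id (TP 4) :=
  ringHom_ext (by simp [cubic])

theorem subst_mem_span_xx (a b c : ℤ) {v : TP 4} (hv : v ∈ Ideal.span {x}) :
    subst a b c v ∈ Ideal.span {x} := by
  obtain ⟨t₁, t₂, t₃, rfl⟩ := mem_span_xx_iff.1 hv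
  rw [map_cubic _ (subst_xx a b c)]
  exact mem_span_xx_iff.2 ⟨_, _, _, rfl⟩

theorem exists_eq_subst {φ : TP 4 →+* TP 4} (hφ : φ x ∈ Ideal.span {x}) :
    ∃ a b c : ℤ, φ = subst a b c := by
  obtain ⟨a, b, c, h⟩ := mem_span_xx_iff.1 hφ
  exact ⟨a, b, c, eq_subst_iff.2 h⟩

theorem exists_eq_subst_of_ringEquiv (σ : TP 4 ≃+* TP 4)
    (hσ : (Ideal.span {x}).map σ.toRingHom = Ideal.span {x}) :
    ∃ u₁ u₂ u₃ : ℤ, (u₁ = 1 ∨ u₁ = -1) ∧ σ.toRingHom = subst u₁ u₂ u₃ := by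
  have hx : x ∈ Ideal.span {x} := Ideal.mem_span_singleton_self x
  obtain ⟨u₁, u₂, u₃, hu⟩ := exists_eq_subst (hσ ▸ Ideal.mem_map_of_mem σ.toRingHom hx)
  obtain ⟨v₁, v₂, v₃, hv⟩ :=
    exists_eq_subst (φ := σ.symm.toRingHom) (symm_mem_span_xx hσ hx)
  have hid : (subst u₁ u₂ u₃).comp (subst v₁ v₂ v₃) = subst 1 0 0 := by
    rw [← hu, ← hv, subst_one_zero_zero, RingEquiv.toRingHom_comp_symm_toRingHom]
  rw [subst_comp_subst, subst_inj] at hid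
  exact ⟨u₁, u₂, u₃, Int.isUnit_iff.1 (IsUnit.of_mul_eq_one_right _ hid.1), hu⟩

def substEquiv {u₁ : ℤ} (hu : u₁ = 1 ∨ u₁ = -1) (u₂ u₃ : ℤ) : TP 4 ≃+* TP 4 :=
  RingEquiv.ofRingHom (subst u₁ u₂ u₃) (subst u₁ (-u₁ * u₂) (2 * u₁ * u₂ ^ 2 - u₃))
    (by
      rw [subst_comp_subst, ← subst_one_zero_zero, subst_inj]
      rcases hu with rfl | rfl <;> exact ⟨by ring, by ring, by ring⟩)
    (by
      rw [subst_comp_subst, ← subst_one_zero_zero, subst_inj]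
      rcases hu with rfl | rfl <;> exact ⟨by ring, by ring, by ring⟩)

theorem substEquiv_toRingHom {u₁ : ℤ} (hu : u₁ = 1 ∨ u₁ = -1) (u₂ u₃ : ℤ) :
    (substEquiv hu u₂ u₃).toRingHom = subst u₁ u₂ u₃ :=
  rfl

theorem map_span_xx_substEquiv {u₁ : ℤ} (hu : u₁ = 1 ∨ u₁ = -1) (u₂ u₃ : ℤ) :
    (Ideal.span {x}).map (substEquiv hu u₂ u₃).toRingHom = Ideal.span {x} := by
  refine le_antisymm (Ideal.map_le_iff_le_comap.2 fun v hv => subst_mem_span_xx _ _ _ hv)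
    fun v hv => ?_
  have hv' : (substEquiv hu u₂ u₃).symm v ∈ Ideal.span {x} := subst_mem_span_xx _ _ _ hv
  simpa using Ideal.mem_map_of_mem (substEquiv hu u₂ u₃).toRingHom hv'

theorem subst_sub_pow_mem_span {p : ℕ} (hp : p.Prime) {a b c : ℤ}
    (h : cubic a b c - x ^ p ∈ Ideal.span {(p : TP 4)}) (v : TP 4) :
    subst a b c v - v ^ p ∈ Ideal.span {(p : TP 4)} :=
  sub_pow_mem_span_of_xx hp _ (by rwa [subst_xx]) v

theorem cubic_sub_xx_sq_mem_span_two_iff {a b c : ℤ} :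
    cubic a b c - x ^ 2 ∈ Ideal.span {((2 : ℕ) : TP 4)} ↔ 2 ∣ a ∧ 2 ∣ b - 1 ∧ 2 ∣ c := by
  rw [show cubic a b c - x ^ 2 = cubic a (b - 1) c by rw [cubic, cubic]; push_cast; ring,
    show ((2 : ℕ) : TP 4) = ((2 : ℤ) : TP 4) by norm_num, cubic_mem_span_intCast_iff]

theorem cubic_sub_xx_cube_mem_span_three_iff {a b c : ℤ} :
    cubic a b c - x ^ 3 ∈ Ideal.span {((3 : ℕ) : TP 4)} ↔ 3 ∣ a ∧ 3 ∣ b ∧ 3 ∣ c - 1 := by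
  rw [show cubic a b c - x ^ 3 = cubic a b (c - 1) by rw [cubic, cubic]; push_cast; ring,
    show ((3 : ℕ) : TP 4) = ((3 : ℤ) : TP 4) by norm_num, cubic_mem_span_intCast_iff]

theorem cubic_sub_xx_pow_mem_span_iff {p : ℕ} (hp : 4 ≤ p) {a b c : ℤ} :
    cubic a b c - x ^ p ∈ Ideal.span {(p : TP 4)} ↔
      (p : ℤ) ∣ a ∧ (p : ℤ) ∣ b ∧ (p : ℤ) ∣ c := by
  rw [pow_eq_zero_of_le hp xx_pow_eq_zero, sub_zero, ← Int.cast_natCast,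
    cubic_mem_span_intCast_iff]

theorem relations_of_commute_subst_four {b c a B C : ℤ}
    (h : (subst 4 b c).comp (subst a B C) = (subst a B C).comp (subst 4 b c)) :
    12 * B = (a ^ 2 - a) * b ∧ 60 * C = (a ^ 3 - a) * c + 2 * b * B * (a - 4) := by
  rw [subst_comp_subst, subst_comp_subst, subst_inj] at h
  exact ⟨by linear_combination h.2.1, by linear_combination h.2.2⟩

end TP

theorem twelve_dvd_sq_mul_sq_sub_one (n : ℤ) : 12 ∣ n ^ 2 * (n ^ 2 - 1) := by
  have := (ZMod.intCast_zmod_eq_zero_iff_dvd (n ^ 2 * (n ^ 2 - 1)) 12).1 (by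
    push_cast; generalize (n : ZMod 12) = m; revert m; decide)
  exact_mod_cast this

theorem sixty_dvd_sq_mul_pow_four_sub_one (n : ℤ) : 60 ∣ n ^ 2 * (n ^ 4 - 1) := by
  have := (ZMod.intCast_zmod_eq_zero_iff_dvd (n ^ 2 * (n ^ 4 - 1)) 60).1 (by
    push_cast; generalize (n : ZMod 60) = m; revert m; decide)
  exact_mod_cast this

set_option maxRecDepth 10000 in
theorem three_hundred_sixty_dvd_sq_mul_sq_sub_one_mul_sq_sub_four (n : ℤ) :
    360 ∣ n ^ 2 * (n ^ 2 - 1) * (n ^ 2 - 4) := by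
  have := (ZMod.intCast_zmod_eq_zero_iff_dvd (n ^ 2 * (n ^ 2 - 1) * (n ^ 2 - 4)) 360).1 (by
    push_cast; generalize (n : ZMod 360) = m; revert m; decide)
  exact_mod_cast this

theorem coefficient_numerators_dvd (k d2 n : ℤ) :
    12 ∣ k * (n ^ 2 * (n ^ 2 - 1)) ∧ 60 ∣ n ^ 2 * (n ^ 4 - 1) * d2 ∧
      360 ∣ k ^ 2 * n ^ 2 * (n ^ 2 - 1) * (n ^ 2 - 4) :=
  ⟨(twelve_dvd_sq_mul_sq_sub_one n).mul_left k, (sixty_dvd_sq_mul_pow_four_sub_one n).mul_right d2,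
    by simpa only [mul_assoc] using
      (three_hundred_sixty_dvd_sq_mul_sq_sub_one_mul_sq_sub_four n).mul_left (k ^ 2)⟩

theorem twelve_mul_ccoef (k : ℤ) (p : ℕ) :
    12 * ccoef k p = k * ((p : ℤ) ^ 2 * ((p : ℤ) ^ 2 - 1)) :=
  Int.mul_ediv_cancel' (coefficient_numerators_dvd k 0 p).1

theorem three_hundred_sixty_mul_dcoef (k d2 : ℤ) (p : ℕ) :
    360 * dcoef k d2 p =
      6 * ((p : ℤ) ^ 2 * ((p : ℤ) ^ 4 - 1) * d2) +
        k ^ 2 * (p : ℤ) ^ 2 * ((p : ℤ) ^ 2 - 1) * ((p : ℤ) ^ 2 - 4) := by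
  obtain ⟨-, h60, h360⟩ := coefficient_numerators_dvd k d2 p
  rw [dcoef]
  linear_combination 6 * Int.mul_ediv_cancel' h60 + Int.mul_ediv_cancel' h360

theorem ccoef_two (k : ℤ) : ccoef k 2 = k := by
  have := twelve_mul_ccoef k 2
  push_cast at this
  linarith

theorem dcoef_two (k d2 : ℤ) : dcoef k d2 2 = d2 := by
  have := three_hundred_sixty_mul_dcoef k d2 2
  push_cast at this
  linarith

theorem ccoef_three (k : ℤ) : ccoef k 3 = 6 * k := by
  have := twelve_mul_ccoef k 3
  push_cast at this
  linarith

theorem dcoef_three (k d2 : ℤ) : dcoef k d2 3 = 12 * d2 + k ^ 2 := by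
  have := three_hundred_sixty_mul_dcoef k d2 3
  push_cast at this
  linarith

theorem ccoef_five (k : ℤ) : ccoef k 5 = 50 * k := by
  have := twelve_mul_ccoef k 5
  push_cast at this
  linarith

theorem dcoef_five (k d2 : ℤ) : dcoef k d2 5 = 260 * d2 + 35 * k ^ 2 := by
  have := three_hundred_sixty_mul_dcoef k d2 5
  push_cast at this
  linarith

theorem Nat.Prime.coprime_360 {p : ℕ} (hp : p.Prime) (h5 : 5 < p) : Nat.Coprime p 360 := by
  have h2 := (Nat.coprime_primes hp Nat.prime_two).2 (by omega)
  have h3 := (Nat.coprime_primes hp Nat.prime_three).2 (by omega)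
  have h5 := (Nat.coprime_primes hp Nat.prime_five).2 (by omega)
  exact ((h2.pow_right 3).mul_right (h3.pow_right 2)).mul_right h5

theorem prime_dvd_ccoef_dcoef {p : ℕ} (hp : p.Prime) (h5 : 5 ≤ p) (k d2 : ℤ) :
    (p : ℤ) ∣ ccoef k p ∧ (p : ℤ) ∣ dcoef k d2 p := by
  rcases h5.eq_or_lt with rfl | h7
  · rw [ccoef_five, dcoef_five]
    exact ⟨⟨10 * k, by ring⟩, ⟨52 * d2 + 7 * k ^ 2, by ring⟩⟩
  have hcop : IsCoprime (p : ℤ) 360 := Nat.isCoprime_iff_coprime.2 (hp.coprime_360 h7)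
  refine ⟨hcop.dvd_of_dvd_mul_left ⟨30 * k * (p * ((p : ℤ) ^ 2 - 1)), ?_⟩,
    hcop.dvd_of_dvd_mul_left ⟨6 * (p * ((p : ℤ) ^ 4 - 1) * d2) +
      k ^ 2 * p * ((p : ℤ) ^ 2 - 1) * ((p : ℤ) ^ 2 - 4), ?_⟩⟩
  · linear_combination 30 * twelve_mul_ccoef k p
  · linear_combination three_hundred_sixty_mul_dcoef k d2 p

theorem eq_ccoef_of_relation {k B : ℤ} {p : ℕ}
    (h : 12 * B = (((p : ℤ) ^ 2) ^ 2 - (p : ℤ) ^ 2) * k) : B = ccoef k p := by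
  linarith [twelve_mul_ccoef k p]

theorem eq_dcoef_of_relation {k d2 C : ℤ} {p : ℕ}
    (h : 60 * C = (((p : ℤ) ^ 2) ^ 3 - (p : ℤ) ^ 2) * d2 +
      2 * k * ccoef k p * ((p : ℤ) ^ 2 - 4)) : C = dcoef k d2 p := by
  have h12 := twelve_mul_ccoef k p
  have h360 := three_hundred_sixty_mul_dcoef k d2 p
  refine mul_left_cancel₀ (by norm_num : (360 : ℤ) ≠ 0) ?_
  linear_combination 6 * h - h360 + k * ((p : ℤ) ^ 2 - 4) * h12

open TP

theorem specKD_iff {k d2 : ℤ} {S : AdamsFamily 4} :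
    SpecKD k d2 S ↔ S.ψ P2 = subst 4 k d2 ∧
      ∀ p : Nat.Primes, 2 < (p : ℕ) →
        S.ψ p = subst ((p : ℤ) ^ 2) (ccoef k p) (dcoef k d2 p) := by
  simp only [SpecKD, eq_subst_iff, cubic]
  push_cast
  rfl

theorem subst_ccoef_dcoef_comm (k d2 : ℤ) (p q : ℕ) :
    (subst ((p : ℤ) ^ 2) (ccoef k p) (dcoef k d2 p)).comp
        (subst ((q : ℤ) ^ 2) (ccoef k q) (dcoef k d2 q)) =
      (subst ((q : ℤ) ^ 2) (ccoef k q) (dcoef k d2 q)).comp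
        (subst ((p : ℤ) ^ 2) (ccoef k p) (dcoef k d2 p)) := by
  rw [subst_comp_subst, subst_comp_subst, subst_inj]
  have hp := twelve_mul_ccoef k p
  have hq := twelve_mul_ccoef k q
  have hp' := three_hundred_sixty_mul_dcoef k d2 p
  have hq' := three_hundred_sixty_mul_dcoef k d2 q
  set s : ℤ := (p : ℤ)
  set t : ℤ := (q : ℤ)
  refine ⟨by ring, mul_left_cancel₀ (by norm_num : (12 : ℤ) ≠ 0) ?_,
    mul_left_cancel₀ (by norm_num : (360 : ℤ) ≠ 0) ?_⟩
  · linear_combination (t ^ 2 - t ^ 4) * hp + (s ^ 4 - s ^ 2) * hq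
  · linear_combination (t ^ 2 - t ^ 6) * hp' + (s ^ 6 - s ^ 2) * hq' +
      60 * (s ^ 2 - t ^ 2) * ccoef k q * hp + 5 * (s ^ 2 - t ^ 2) * k * (s ^ 2 * (s ^ 2 - 1)) * hq

theorem cubic_ccoef_dcoef_sub_pow_mem_span {k d2 : ℤ} (hk : k = 1 ∨ k = 5) (hd2 : Even d2)
    {p : ℕ} (hp : p.Prime) :
    cubic ((p : ℤ) ^ 2) (ccoef k p) (dcoef k d2 p) - x ^ p ∈ Ideal.span {(p : TP 4)} := by
  have h4 : p ≠ 4 := by rintro rfl; norm_num at hp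
  rcases (show p = 2 ∨ p = 3 ∨ 5 ≤ p by have := hp.two_le; omega) with rfl | rfl | h5
  · rw [cubic_sub_xx_sq_mem_span_two_iff, ccoef_two, dcoef_two]
    exact ⟨⟨2, by norm_num⟩, by rcases hk with rfl | rfl <;> norm_num, even_iff_two_dvd.1 hd2⟩
  · rw [cubic_sub_xx_cube_mem_span_three_iff, ccoef_three, dcoef_three]
    refine ⟨⟨3, by norm_num⟩, ⟨2 * k, by ring⟩, ?_⟩
    rcases hk with rfl | rfl
    · exact ⟨4 * d2, by ring⟩
    · exact ⟨4 * d2 + 8, by ring⟩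
  · rw [cubic_sub_xx_pow_mem_span_iff (by omega)]
    exact ⟨dvd_pow_self _ two_ne_zero, prime_dvd_ccoef_dcoef hp h5 k d2⟩

namespace AdamsFamily

def model (k d2 : ℤ) (hk : k = 1 ∨ k = 5) (hd2 : Even d2) : AdamsFamily 4 where
  ψ p := subst ((p : ℤ) ^ 2) (ccoef k p) (dcoef k d2 p)
  maps_ideal _ _ := subst_mem_span_xx _ _ _
  comm p q := subst_ccoef_dcoef_comm k d2 p q
  frob p := subst_sub_pow_mem_span p.2 (cubic_ccoef_dcoef_sub_pow_mem_span hk hd2 p.2)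

theorem specKD_model (k d2 : ℤ) (hk : k = 1 ∨ k = 5) (hd2 : Even d2) :
    SpecKD k d2 (model k d2 hk hd2) := by
  refine specKD_iff.2 ⟨?_, fun p _ => rfl⟩
  change subst (((2 : ℕ) : ℤ) ^ 2) (ccoef k 2) (dcoef k d2 2) = _
  rw [ccoef_two, dcoef_two]
  norm_num

end AdamsFamily

theorem not_adamsIso_of_ne {k d2 k' d2' : ℤ} (hk : k = 1 ∨ k = 5) (h0 : 0 ≤ d2) (h58 : d2 ≤ 58)
    (hk' : k' = 1 ∨ k' = 5) (h0' : 0 ≤ d2') (h58' : d2' ≤ 58) {S S' : AdamsFamily 4}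
    (hS : S.ψ P2 = subst 4 k d2) (hS' : S'.ψ P2 = subst 4 k' d2')
    (hne : (k, d2) ≠ (k', d2')) : ¬ AdamsIso S S' := by
  rintro ⟨σ, hσ, hcomm⟩
  obtain ⟨u₁, u₂, u₃, hu, hσu⟩ := exists_eq_subst_of_ringEquiv σ hσ
  have h := hcomm P2
  rw [hσu, hS, hS', subst_comp_subst, subst_comp_subst, subst_inj] at h
  obtain ⟨-, h₂, h₃⟩ := h
  refine hne (Prod.ext ?_ ?_)
  · rcases hu with rfl | rfl <;> omega
  · rcases hu with rfl | rfl
    · obtain rfl : u₂ = 0 := by omega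
      omega
    · omega

theorem exists_eq_subst_sq_of_sub_mem {φ : TP 4 →+* TP 4} (hφ : φ x ∈ Ideal.span {x}) {a : ℤ}
    (h : φ x - (a : TP 4) * x ∈ Ideal.span {x ^ 2}) : ∃ B C : ℤ, φ = subst a B C := by
  obtain ⟨a', B, C, rfl⟩ := exists_eq_subst hφ
  rw [subst_xx,
    show cubic a' B C - a * x = cubic (a' - a) B C by rw [cubic, cubic]; push_cast; ring] at h
  rw [← sub_eq_zero.1 (eq_zero_of_cubic_mem_span_xx_sq h)]
  exact ⟨B, C, rfl⟩

theorem exists_subst_normalForm {b c : ℤ} (hb : Odd b) (hb3 : ¬ 3 ∣ b) (hc : Even c) :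
    ∃ u₁ u₂ u₃ k d2 : ℤ, (u₁ = 1 ∨ u₁ = -1) ∧ (k = 1 ∨ k = 5) ∧ Even d2 ∧ 0 ≤ d2 ∧ d2 ≤ 58 ∧
      (subst u₁ u₂ u₃).comp (subst 4 b c) = (subst 4 k d2).comp (subst u₁ u₂ u₃) := by
  obtain ⟨u₁, k, hu, hk, u₂, hbk⟩ :
      ∃ u₁ k : ℤ, (u₁ = 1 ∨ u₁ = -1) ∧ (k = 1 ∨ k = 5) ∧ 12 ∣ b - u₁ * k := by
    rw [Int.odd_iff] at hb
    have : b % 12 = 1 ∨ b % 12 = 5 ∨ b % 12 = 7 ∨ b % 12 = 11 := by omega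
    rcases this with h | h | h | h
    · exact ⟨1, 1, .inl rfl, .inl rfl, by omega⟩
    · exact ⟨1, 5, .inl rfl, .inr rfl, by omega⟩
    · exact ⟨-1, 5, .inr rfl, .inr rfl, by omega⟩
    · exact ⟨-1, 1, .inr rfl, .inl rfl, by omega⟩
  have hu₁ : u₁ ^ 2 = 1 := by rcases hu with rfl | rfl <;> norm_num
  obtain ⟨m, hm⟩ : ∃ m, m = 2 * b * u₂ + c - 8 * u₁ * u₂ * k := ⟨_, rfl⟩
  have hm2 : m % 2 = 0 := by
    obtain ⟨c', rfl⟩ := hc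
    rw [hm, show 2 * b * u₂ + (c' + c') - 8 * u₁ * u₂ * k = 2 * (b * u₂ + c' - 4 * u₁ * u₂ * k)
      by ring]
    omega
  refine ⟨u₁, u₂, u₁ * (m / 60), k, m % 60, hu, hk, Int.even_iff.2 (by omega), by omega,
    by omega, ?_⟩
  rw [subst_comp_subst, subst_comp_subst, subst_inj]
  refine ⟨by ring, by linear_combination hbk + b * hu₁, ?_⟩
  linear_combination -u₁ * Int.emod_add_mul_ediv m 60 + (c * u₁ + 8 * u₂ * k) * hu₁ - u₁ * hm

theorem specKD_of_subst {S : AdamsFamily 4} {k d2 : ℤ}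
    (hlin : ∀ p : Nat.Primes, ∃ B C : ℤ, S.ψ p = subst ((p : ℤ) ^ 2) B C)
    (h2 : S.ψ P2 = subst 4 k d2) : SpecKD k d2 S := by
  refine specKD_iff.2 ⟨h2, fun p _ => ?_⟩
  obtain ⟨B, C, hp⟩ := hlin p
  have hcomm := S.comm P2 p
  rw [h2, hp] at hcomm
  obtain ⟨hB, hC⟩ := relations_of_commute_subst_four hcomm
  obtain rfl := eq_ccoef_of_relation hB
  rw [hp, eq_dcoef_of_relation hC]

theorem exists_conj_eq_subst {R : AdamsFamily 4} {σ : TP 4 ≃+* TP 4}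
    (hσ : (Ideal.span {x}).map σ.toRingHom = Ideal.span {x}) {u₁ u₂ u₃ : ℤ}
    (hσu : σ.toRingHom = subst u₁ u₂ u₃) (hu₁ : u₁ ≠ 0) {p : Nat.Primes} {a B C : ℤ}
    (hR : R.ψ p = subst a B C) : ∃ B' C' : ℤ, (R.conj σ hσ).ψ p = subst a B' C' := by
  obtain ⟨a', B', C', h⟩ :=
    exists_eq_subst ((R.conj σ hσ).maps_ideal p x (Ideal.mem_span_singleton_self x))
  have hc := R.conj_ψ_comp hσ p
  rw [h, hσu, hR, subst_comp_subst, subst_comp_subst, subst_inj] at hc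
  obtain rfl : a' = a := mul_left_cancel₀ hu₁ (hc.1.trans (mul_comm _ _))
  exact ⟨B', C', h⟩

theorem odd_and_not_three_dvd_and_even_of_ψ_eq_subst (R : AdamsFamily 4) {b c B C : ℤ}
    (h2 : R.ψ P2 = subst 4 b c) (h3 : R.ψ P3 = subst 9 B C) : Odd b ∧ ¬ 3 ∣ b ∧ Even c := by
  obtain ⟨-, hb, hc⟩ := cubic_sub_xx_sq_mem_span_two_iff.1 (by
    have := R.frob P2 x
    rwa [h2, subst_xx] at this)
  obtain ⟨-, -, hC⟩ := cubic_sub_xx_cube_mem_span_three_iff.1 (by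
    have := R.frob P3 x
    rwa [h3, subst_xx] at this)
  obtain ⟨hB, hC'⟩ := relations_of_commute_subst_four (h2 ▸ h3 ▸ R.comm P2 P3)
  refine ⟨Int.odd_iff.2 (by omega), ?_, even_iff_two_dvd.2 hc⟩
  rintro ⟨t, rfl⟩
  obtain rfl : B = 18 * t := by linarith
  have : C = 12 * c + 9 * t ^ 2 := by linarith
  omega

theorem exists_specKD_adamsIso (R : AdamsFamily 4)
    (hR : ∀ p : Nat.Primes, R.ψ p x - ((p : ℕ) : TP 4) ^ 2 * x ∈ Ideal.span {x ^ 2}) :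
    ∃ (k d2 : ℤ) (S : AdamsFamily 4), (k = 1 ∨ k = 5) ∧ Even d2 ∧ 0 ≤ d2 ∧ d2 ≤ 58 ∧
      SpecKD k d2 S ∧ AdamsIso R S := by
  have hlin (p : Nat.Primes) : ∃ B C : ℤ, R.ψ p = subst ((p : ℤ) ^ 2) B C :=
    exists_eq_subst_sq_of_sub_mem (R.maps_ideal p x (Ideal.mem_span_singleton_self x))
      (by exact_mod_cast hR p)
  obtain ⟨b, c, h2⟩ := hlin P2
  obtain ⟨B, C, h3⟩ := hlin P3
  replace h2 : R.ψ P2 = subst 4 b c := h2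
  obtain ⟨hb, hb3, hc⟩ := odd_and_not_three_dvd_and_even_of_ψ_eq_subst R h2 h3
  obtain ⟨u₁, u₂, u₃, k, d2, hu, hk, hd2, h0, h58, hnf⟩ := exists_subst_normalForm hb hb3 hc
  have hσ := map_span_xx_substEquiv hu u₂ u₃
  have hu₁ : u₁ ≠ 0 := by rcases hu with rfl | rfl <;> norm_num
  refine ⟨k, d2, R.conj _ hσ, hk, hd2, h0, h58, specKD_of_subst (fun p => ?_) ?_,
    R.adamsIso_conj hσ⟩
  · obtain ⟨B, C, hp⟩ := hlin p
    exact exists_conj_eq_subst hσ (substEquiv_toRingHom hu u₂ u₃) hu₁ hp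
  · have h := R.conj_ψ_comp hσ P2
    rw [h2, substEquiv_toRingHom, hnf] at h
    exact (RingHom.cancel_right (substEquiv hu u₂ u₃).surjective).1 h

theorem stmt11 :
    (∀ k d2 : ℤ, (k = 1 ∨ k = 5) → Even d2 → 0 ≤ d2 → d2 ≤ 58 →
      (∀ p : Nat.Primes, 2 < (p : ℕ) →
        (12 : ℤ) ∣ k * (((p : ℕ) : ℤ) ^ 2 * (((p : ℕ) : ℤ) ^ 2 - 1)) ∧
        (60 : ℤ) ∣ ((p : ℕ) : ℤ) ^ 2 * (((p : ℕ) : ℤ) ^ 4 - 1) * d2 ∧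
        (360 : ℤ) ∣ k ^ 2 * ((p : ℕ) : ℤ) ^ 2 * (((p : ℕ) : ℤ) ^ 2 - 1) *
          (((p : ℕ) : ℤ) ^ 2 - 4)) ∧
      ∃ S : AdamsFamily 4, SpecKD k d2 S) ∧
    (∀ k d2 k' d2' : ℤ, (k = 1 ∨ k = 5) → Even d2 → 0 ≤ d2 → d2 ≤ 58 →
      (k' = 1 ∨ k' = 5) → Even d2' → 0 ≤ d2' → d2' ≤ 58 →
      ∀ S S' : AdamsFamily 4, SpecKD k d2 S → SpecKD k' d2' S' →
        (k, d2) ≠ (k', d2') → ¬ AdamsIso S S') ∧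
    (∀ R : AdamsFamily 4,
      (∀ p : Nat.Primes,
        R.ψ p (xx 4) - ((p : ℕ) : TP 4) ^ 2 * xx 4 ∈ Ideal.span {xx 4 ^ 2}) →
      ∃ (k d2 : ℤ) (S : AdamsFamily 4), (k = 1 ∨ k = 5) ∧ Even d2 ∧ 0 ≤ d2 ∧ d2 ≤ 58 ∧
        SpecKD k d2 S ∧ AdamsIso R S) := by
  refine ⟨fun k d2 hk hd2 _ _ => ⟨fun p _ => coefficient_numerators_dvd k d2 p,
    _, AdamsFamily.specKD_model k d2 hk hd2⟩, ?_, exists_specKD_adamsIso⟩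
  intro k d2 k' d2' hk _ h0 h58 hk' _ h0' h58' S S' hS hS' hne
  exact not_adamsIso_of_ne hk h0 h58 hk' h0' h58' (specKD_iff.1 hS).1 (specKD_iff.1 hS').1 hne
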